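/- arXiv:2408.08990 — 2 statements merged into one kernel-verified Lean document; each statement's English description precedes it below -/
import Mathlib

section
/- Let (X_1,Y_1),...,(X_{n+1},Y_{n+1}) be i.i.d., let S : X × Y → ℝ be a fixed measurable conformity score, and let 𝔛 = {𝒳_1,...,𝒳_K} be a fixed measurable partition of X with P(X_1 ∈ 𝒳_k) > 0. Define Ĉ(X_{n+1}) = {y : S(X_{n+1},y) ≤ q_k} when X_{n+1} ∈ 𝒳_k, where q_k is the ⌈(1-α)(N_k+1)⌉-th smallest value of {S(X_i,Y_i) : i ≤ n, X_i ∈ 𝒳_k} (with N_k the number of such i, and q_k = +∞ if ⌈(1-α)(N_k+1)⌉ > N_k). Then P(Y_{n+1} ∈ Ĉ(X_{n+1}) | X_{n+1} ∈ 𝒳_k) ≥ 1-α for every k. -/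
/-! The i.i.d. data vector has a permutation-invariant law. Call an index `j` *low-ranked* if it
lies in the group and fewer than `⌈(1-α)N⌉` of the `N` group members have a strictly smaller
score. Pointwise, at least `min ⌈(1-α)N⌉ N ≥ (1-α)N` indices are low-ranked: otherwise the
member of smallest score among those that are not low-ranked would be low-ranked. Integrating, and
using that by exchangeability every index has the same probability of being low-ranked and of
lying in the group, the test point is low-ranked with probability at least `(1-α)` times the
probability that it lies in the group. A low-ranked test point is covered, its score being at most
the `⌈(1-α)(N_k+1)⌉`-th smallest calibration score of its group. -/

open MeasureTheory ProbabilityTheory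
open scoped ENNReal Classical

/-- The multiset of calibration conformity scores of the points whose covariate falls in the
group `G` (calibration indices being the first `n` of `Fin (n+1)`). -/
noncomputable def calibGroupScores {Ω 𝒳 𝒴 : Type*} (n : ℕ)
    (X : Fin (n + 1) → Ω → 𝒳) (Y : Fin (n + 1) → Ω → 𝒴)
    (S : 𝒳 → 𝒴 → ℝ) (G : Set 𝒳) (ω : Ω) : Multiset ℝ :=
  (Finset.univ.filter (fun i : Fin n => X i.castSucc ω ∈ G)).val.map
    (fun i => S (X i.castSucc ω) (Y i.castSucc ω))

/-- The split-conformal coverage event within group `G`: writing `N` for the number of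
calibration points in `G` and `t = ⌈(1-α)(N+1)⌉`, the test score is at most the `t`-th
smallest calibration score in the group (coverage being automatic when `t > N`, i.e. the
threshold is `+∞`). -/
noncomputable def groupCoverageEvent {Ω 𝒳 𝒴 : Type*} (n : ℕ)
    (X : Fin (n + 1) → Ω → 𝒳) (Y : Fin (n + 1) → Ω → 𝒴)
    (S : 𝒳 → 𝒴 → ℝ) (G : Set 𝒳) (α : ℝ) : Set Ω :=
  {ω | (calibGroupScores n X Y S G ω).card
          < (⌈(1 - α) * (((calibGroupScores n X Y S G ω).card : ℝ) + 1)⌉).toNat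
      ∨ S (X (Fin.last n) ω) (Y (Fin.last n) ω)
          ≤ (Multiset.sort (calibGroupScores n X Y S G ω) (· ≤ ·)).getD
              ((⌈(1 - α) * (((calibGroupScores n X Y S G ω).card : ℝ) + 1)⌉).toNat - 1) 0}

open Finset

theorem List.Pairwise.le_getD_of_countP_lt {α : Type*} [LinearOrder α] {l : List α}
    (hl : l.Pairwise (· ≤ ·)) {t : ℕ} {x : α} (d : α) (ht : t ≤ l.length)
    (h : l.countP (· < x) < t) : x ≤ l.getD (t - 1) d := by
  by_contra! hx
  rw [List.getD_eq_getElem _ _ (by omega)] at hx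
  have htake : ∀ y ∈ l.take t, y < x := by
    intro y hy
    obtain ⟨i, hi, rfl⟩ := List.mem_iff_getElem.1 hy
    rw [List.length_take] at hi
    rw [List.getElem_take]
    exact lt_of_le_of_lt (hl.rel_get_of_le (a := ⟨i, by omega⟩) (b := ⟨t - 1, by omega⟩)
      (by simp only [Fin.mk_le_mk]; omega)) hx
  have : t ≤ l.countP (· < x) :=
    calc t = (l.take t).length := by simp only [List.length_take]; omega
      _ = (l.take t).countP (· < x) := (List.countP_eq_length.2 (by simpa using htake)).symm
      _ ≤ l.countP (· < x) := (List.take_sublist t l).countP_le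
  omega

theorem Multiset.le_sort_getD_of_card_filter_lt {α : Type*} [LinearOrder α] {M : Multiset α}
    {t : ℕ} {x : α} (d : α) (ht : t ≤ M.card) (h : (M.filter (· < x)).card < t) :
    x ≤ (M.sort (· ≤ ·)).getD (t - 1) d := by
  refine (Multiset.pairwise_sort M _).le_getD_of_countP_lt d (by rwa [Multiset.length_sort]) ?_
  rwa [← Multiset.coe_countP, Multiset.sort_eq, Multiset.countP_eq_card_filter]

theorem Finset.min_le_card_filter_card_filter_lt {ι α : Type*} [DecidableEq ι] [LinearOrder α]
    (A : Finset ι) (s : ι → α) (t : ℕ) : min t #A ≤ #{j ∈ A | #{i ∈ A | s i < s j} < t} := by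
  set B := {j ∈ A | #{i ∈ A | s i < s j} < t}
  by_contra! hB
  have hBA : B ⊆ A := Finset.filter_subset _ _
  have hne : (A \ B).Nonempty := by
    rw [← Finset.card_pos, Finset.card_sdiff_of_subset hBA]
    omega
  obtain ⟨j, hj, hmin⟩ := (A \ B).exists_min_image s hne
  have hjA : j ∈ A := (Finset.mem_sdiff.1 hj).1
  refine (Finset.mem_sdiff.1 hj).2 (Finset.mem_filter.2 ⟨hjA, ?_⟩)
  calc #{i ∈ A | s i < s j} ≤ #B := Finset.card_le_card fun i hi => by
        rw [Finset.mem_filter] at hi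
        by_contra hiB
        exact (hmin i (Finset.mem_sdiff.2 ⟨hi.1, hiB⟩)).not_gt hi.2
    _ < t := by omega

theorem Fin.card_filter_univ_castSucc {n : ℕ} (p : Fin (n + 1) → Prop) [DecidablePred p] :
    #{i | p i} = #{i : Fin n | p i.castSucc} + if p (Fin.last n) then 1 else 0 := by
  simp only [Finset.card_filter, Fin.sum_univ_castSucc]

theorem Measurable.card_filter {ι Ω : Type*} [Fintype ι] [MeasurableSpace Ω] {p : ι → Ω → Prop}
    [∀ ω, DecidablePred (p · ω)] (hp : ∀ i, MeasurableSet {ω | p i ω}) :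
    Measurable fun ω => #{i | p i ω} := by
  simp_rw [Finset.card_filter]
  exact Finset.measurable_sum _ fun i _ =>
    Measurable.ite (hp i) measurable_const measurable_const

theorem lintegral_card_filter_mem {ι Ω : Type*} [Fintype ι] [MeasurableSpace Ω] (μ : Measure Ω)
    {E : ι → Set Ω} (hE : ∀ j, MeasurableSet (E j)) :
    ∫⁻ ω, (#{j | ω ∈ E j} : ℝ≥0∞) ∂μ = ∑ j, μ (E j) := by
  have h : ∀ ω, (#{j | ω ∈ E j} : ℝ≥0∞) = ∑ j, (E j).indicator 1 ω := fun ω => by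
    simp only [Finset.card_filter, Nat.cast_sum, Nat.cast_ite, Nat.cast_one, Nat.cast_zero,
      Set.indicator_apply, Pi.one_apply]
  simp_rw [h]
  rw [lintegral_finsetSum _ fun j _ => measurable_one.indicator (hE j)]
  simp_rw [lintegral_indicator_one (hE _)]

theorem ProbabilityTheory.iIndepFun.measurePreserving_comp_perm {Ω ι β : Type*}
    [MeasurableSpace Ω] [Fintype ι] [MeasurableSpace β] {μ : Measure Ω} {Z : ι → Ω → β}
    (hindep : iIndepFun Z μ) (hZ : ∀ i, Measurable (Z i)) (ν : Measure β) [SigmaFinite ν]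
    (hident : ∀ i, μ.map (Z i) = ν) (σ : Equiv.Perm ι) :
    MeasurePreserving (fun z : ι → β => z ∘ σ) (μ.map fun ω i => Z i ω)
      (μ.map fun ω i => Z i ω) := by
  rw [hindep.map_fun_eq_pi_map fun i => (hZ i).aemeasurable]
  simp_rw [hident]
  exact measurePreserving_arrowCongr' _ _ σ.symm (MeasurableEquiv.refl β)
    fun _ => MeasurePreserving.id ν

theorem measure_eq_of_comp_perm_invariant {ι β : Type*} [MeasurableSpace β]
    {π : Measure (ι → β)} (hπ : ∀ σ : Equiv.Perm ι, MeasurePreserving (fun z : ι → β => z ∘ σ) π π)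
    {E : ι → Set (ι → β)} (hE : ∀ j, MeasurableSet (E j))
    (hEσ : ∀ (σ : Equiv.Perm ι) j, (fun z : ι → β => z ∘ σ) ⁻¹' E j = E (σ j)) (j l : ι) :
    π (E j) = π (E l) := by
  have hswap := hEσ (Equiv.swap l j) l
  rw [Equiv.swap_apply_left] at hswap
  rw [← hswap, (hπ _).measure_preimage (hE l).nullMeasurableSet]

section GroupRank

variable {ι β : Type*} [Fintype ι] {G : Set β} {f : β → ℝ} {α : ℝ}

/-- Strengthens "`j` is covered by the split-conformal set of the other members of its group" to a
condition on counts alone, whose measurability and behaviour under permutations are elementary. -/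
def groupRankEvent (G : Set β) (f : β → ℝ) (α : ℝ) (j : ι) : Set (ι → β) :=
  {z | z j ∈ G ∧ #{i | z i ∈ G ∧ f (z i) < f (z j)} < ⌈(1 - α) * #{i | z i ∈ G}⌉.toNat}

theorem comp_perm_mem_groupRankEvent (σ : Equiv.Perm ι) (z : ι → β) (j : ι) :
    z ∘ σ ∈ groupRankEvent G f α j ↔ z ∈ groupRankEvent G f α (σ j) := by
  have hcard : ∀ (p : β → Prop) [DecidablePred p], #{i | p (z (σ i))} = #{i | p (z i)} :=
    fun p _ => Finset.card_equiv σ (by simp)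
  simp only [groupRankEvent, Set.mem_ofPred_eq, Function.comp_apply, hcard (· ∈ G)]
  rw [hcard (fun b => b ∈ G ∧ f b < f (z (σ j)))]

theorem measurableSet_groupRankEvent [MeasurableSpace β] (hG : MeasurableSet G)
    (hf : Measurable f) (α : ℝ) (j : ι) : MeasurableSet (groupRankEvent G f α j) := by
  have hmem : ∀ i, MeasurableSet {z : ι → β | z i ∈ G} := fun i => measurable_pi_apply i hG
  have hcount := Measurable.card_filter (p := fun i (z : ι → β) => z i ∈ G ∧ f (z i) < f (z j))
    fun i => (hmem i).inter
      (measurableSet_lt (hf.comp (measurable_pi_apply i)) (hf.comp (measurable_pi_apply j)))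
  have hsize := Measurable.card_filter (p := fun i (z : ι → β) => z i ∈ G) hmem
  rw [groupRankEvent, Set.ofPred_and]
  exact (hmem j).inter (measurableSet_lt hcount
    ((measurable_from_nat (f := fun N : ℕ => ⌈(1 - α) * (N : ℝ)⌉.toNat)).comp hsize))

theorem ofReal_mul_card_le_card_groupRankEvent (hα : 0 ≤ α) (z : ι → β) :
    ENNReal.ofReal (1 - α) * #{j | z j ∈ G} ≤ #{j | z ∈ groupRankEvent G f α j} := by
  set A : Finset ι := {j | z j ∈ G}
  set t := ⌈(1 - α) * #A⌉.toNat
  have hrank : #{j | z ∈ groupRankEvent G f α j}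
      = #{j ∈ A | #{i ∈ A | f (z i) < f (z j)} < t} := by
    simp only [A, t, groupRankEvent, Set.mem_ofPred_eq, Finset.filter_filter]
    congr! 1
    ext j
    simp
  have ht : (1 - α) * #A ≤ t := (Int.le_ceil _).trans (by exact_mod_cast Int.self_le_toNat _)
  have hA : (1 - α) * #A ≤ #A := by nlinarith [(#A).cast_nonneg (α := ℝ)]
  calc ENNReal.ofReal (1 - α) * #A = ENNReal.ofReal ((1 - α) * #A) := by
        rw [ENNReal.ofReal_mul' (Nat.cast_nonneg _), ENNReal.ofReal_natCast]
    _ ≤ ENNReal.ofReal (min t #A : ℕ) :=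
        ENNReal.ofReal_le_ofReal (by push_cast; exact le_min ht hA)
    _ ≤ _ := by
        rw [ENNReal.ofReal_natCast, hrank]
        exact_mod_cast Finset.min_le_card_filter_card_filter_lt A (fun i => f (z i)) t

theorem ofReal_mul_measure_le_measure_groupRankEvent [MeasurableSpace β] {π : Measure (ι → β)}
    (hπ : ∀ σ : Equiv.Perm ι, MeasurePreserving (fun z : ι → β => z ∘ σ) π π)
    (hG : MeasurableSet G) (hf : Measurable f) (hα : 0 ≤ α) (l : ι) :
    ENNReal.ofReal (1 - α) * π {z | z l ∈ G} ≤ π (groupRankEvent G f α l) := by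
  have hmem : ∀ j, MeasurableSet {z : ι → β | z j ∈ G} := fun j => measurable_pi_apply j hG
  have hrank := measurableSet_groupRankEvent hG hf α (ι := ι)
  have hsum_mem : ∑ j, π {z | z j ∈ G} = Fintype.card ι * π {z | z l ∈ G} := by
    rw [Finset.sum_congr rfl fun j _ =>
      measure_eq_of_comp_perm_invariant hπ hmem (fun _ _ => rfl) j l]
    simp
  have hsum_rank :
      ∑ j, π (groupRankEvent G f α j) = Fintype.card ι * π (groupRankEvent G f α l) := by
    rw [Finset.sum_congr rfl fun j _ => measure_eq_of_comp_perm_invariant hπ hrank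
      (fun σ j => Set.ext fun z => comp_perm_mem_groupRankEvent σ z j) j l]
    simp
  have hcard : (Fintype.card ι : ℝ≥0∞) ≠ 0 := by
    have : Nonempty ι := ⟨l⟩
    exact_mod_cast Fintype.card_ne_zero
  rw [← ENNReal.mul_le_mul_iff_right hcard (ENNReal.natCast_ne_top _), mul_left_comm,
    ← hsum_mem, ← hsum_rank, ← lintegral_card_filter_mem π hmem,
    ← lintegral_card_filter_mem π hrank, ← lintegral_const_mul' _ _ ENNReal.ofReal_ne_top]
  exact lintegral_mono fun z => ofReal_mul_card_le_card_groupRankEvent hα z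

end GroupRank

theorem preimage_groupRankEvent_subset_groupCoverageEvent {Ω 𝒳 𝒴 : Type*} (n : ℕ)
    (X : Fin (n + 1) → Ω → 𝒳) (Y : Fin (n + 1) → Ω → 𝒴) (S : 𝒳 → 𝒴 → ℝ) (G : Set 𝒳) (α : ℝ) :
    (fun ω i => (X i ω, Y i ω)) ⁻¹'
        groupRankEvent (Prod.fst ⁻¹' G) (fun p => S p.1 p.2) α (Fin.last n)
      ⊆ groupCoverageEvent n X Y S G α := by
  rintro ω ⟨hlast, hrank⟩
  set M := calibGroupScores n X Y S G ω
  set x := S (X (Fin.last n) ω) (Y (Fin.last n) ω)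
  have hlast : X (Fin.last n) ω ∈ G := hlast
  have hrank : #{i | X i ω ∈ G ∧ S (X i ω) (Y i ω) < x} < ⌈(1 - α) * #{i | X i ω ∈ G}⌉.toNat :=
    hrank
  have hsize : #{i | X i ω ∈ G} = M.card + 1 := by
    rw [Fin.card_filter_univ_castSucc, if_pos hlast]
    simp only [M, calibGroupScores, Multiset.card_map, Nat.add_right_cancel_iff]
    rfl
  have hbelow : (M.filter (· < x)).card ≤ #{i | X i ω ∈ G ∧ S (X i ω) (Y i ω) < x} := by
    rw [Fin.card_filter_univ_castSucc]
    simp only [M, calibGroupScores, Multiset.filter_map, Multiset.card_map, ← Finset.filter_val,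
      Finset.filter_filter]
    exact le_add_right le_rfl
  rw [hsize, Nat.cast_add_one] at hrank
  exact (lt_or_ge _ _).imp id fun hT =>
    Multiset.le_sort_getD_of_card_filter_lt 0 hT (hbelow.trans_lt hrank)

theorem fixed_partition_group_conditional_coverage_general
    {Ω 𝒳 𝒴 : Type*} [MeasurableSpace Ω] [MeasurableSpace 𝒳] [MeasurableSpace 𝒴]
    (μ : Measure Ω) [IsProbabilityMeasure μ]
    (n K : ℕ)
    (X : Fin (n + 1) → Ω → 𝒳) (Y : Fin (n + 1) → Ω → 𝒴)
    (hmeas : ∀ i, Measurable (fun ω => (X i ω, Y i ω)))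
    (hident : ∀ i, Measure.map (fun ω => (X i ω, Y i ω)) μ
        = Measure.map (fun ω => (X 0 ω, Y 0 ω)) μ)
    (hindep : iIndepFun (fun i ω => (X i ω, Y i ω)) μ)
    (S : 𝒳 → 𝒴 → ℝ) (hS : Measurable (fun p : 𝒳 × 𝒴 => S p.1 p.2))
    (Xs : Fin K → Set 𝒳)
    (hXsmeas : ∀ k, MeasurableSet (Xs k))
    (hpos : ∀ k, 0 < μ {ω | X 0 ω ∈ Xs k})
    (α : ℝ) (hα0 : 0 ≤ α) (k : Fin K) :
    ENNReal.ofReal (1 - α)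
      ≤ ProbabilityTheory.cond μ {ω | X (Fin.last n) ω ∈ Xs k}
          (groupCoverageEvent n X Y S (Xs k) α) := by
  set W : Ω → Fin (n + 1) → 𝒳 × 𝒴 := fun ω i => (X i ω, Y i ω)
  set G : Set (𝒳 × 𝒴) := Prod.fst ⁻¹' Xs k
  have hW : Measurable W := measurable_pi_lambda _ hmeas
  have hG : MeasurableSet G := measurable_fst (hXsmeas k)
  have hlast : MeasurableSet {z : Fin (n + 1) → 𝒳 × 𝒴 | z (Fin.last n) ∈ G} :=
    measurable_pi_apply _ hG
  have hlaw : μ {ω | X (Fin.last n) ω ∈ Xs k} = μ {ω | X 0 ω ∈ Xs k} := by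
    have h := congrArg (· G) (hident (Fin.last n))
    rwa [Measure.map_apply (hmeas _) hG, Measure.map_apply (hmeas _) hG] at h
  have hgroup : MeasurableSet {ω | X (Fin.last n) ω ∈ Xs k} := hW hlast
  have hπ := hindep.measurePreserving_comp_perm hmeas _ hident
  rw [cond_apply hgroup, ← ENNReal.div_eq_inv_mul, ENNReal.le_div_iff_mul_le
    (Or.inl (hlaw ▸ (hpos k).ne')) (Or.inl (measure_ne_top _ _))]
  calc ENNReal.ofReal (1 - α) * μ {ω | X (Fin.last n) ω ∈ Xs k}
      = ENNReal.ofReal (1 - α) * μ.map W {z | z (Fin.last n) ∈ G} := by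
        rw [Measure.map_apply hW hlast]; rfl
    _ ≤ μ.map W (groupRankEvent G (fun p => S p.1 p.2) α (Fin.last n)) :=
        ofReal_mul_measure_le_measure_groupRankEvent hπ hG hS hα0 _
    _ = μ (W ⁻¹' groupRankEvent G (fun p => S p.1 p.2) α (Fin.last n)) :=
        Measure.map_apply hW (measurableSet_groupRankEvent hG hS α _)
    _ ≤ μ ({ω | X (Fin.last n) ω ∈ Xs k} ∩ groupCoverageEvent n X Y S (Xs k) α) :=
        measure_mono (Set.subset_inter (fun _ h => h.1)
          (preimage_groupRankEvent_subset_groupCoverageEvent n X Y S (Xs k) α))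

/-- Group-conditional coverage of split-conformal prediction with a fixed measurable
partition `{𝒳_1, ..., 𝒳_K}`: for i.i.d. data and each group `k` of positive probability,
`P(Y_{n+1} ∈ Ĉ(X_{n+1}) | X_{n+1} ∈ 𝒳_k) ≥ 1 - α`. -/
theorem fixed_partition_group_conditional_coverage
    {Ω 𝒳 𝒴 : Type*} [MeasurableSpace Ω] [MeasurableSpace 𝒳] [MeasurableSpace 𝒴]
    (μ : Measure Ω) [IsProbabilityMeasure μ]
    (n K : ℕ)
    (X : Fin (n + 1) → Ω → 𝒳) (Y : Fin (n + 1) → Ω → 𝒴)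
    (hmeas : ∀ i, Measurable (fun ω => (X i ω, Y i ω)))
    (hident : ∀ i, Measure.map (fun ω => (X i ω, Y i ω)) μ
        = Measure.map (fun ω => (X 0 ω, Y 0 ω)) μ)
    (hindep : iIndepFun (fun i ω => (X i ω, Y i ω)) μ)
    (S : 𝒳 → 𝒴 → ℝ) (hS : Measurable (fun p : 𝒳 × 𝒴 => S p.1 p.2))
    (Xs : Fin K → Set 𝒳)
    (hXsmeas : ∀ k, MeasurableSet (Xs k))
    (hdisj : Pairwise (Function.onFun Disjoint Xs))
    (hcover : (⋃ k, Xs k) = Set.univ)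
    (hpos : ∀ k, 0 < μ {ω | X 0 ω ∈ Xs k})
    (α : ℝ) (hα0 : 0 ≤ α) (hα1 : α ≤ 1) (k : Fin K) :
    ENNReal.ofReal (1 - α)
      ≤ ProbabilityTheory.cond μ {ω | X (Fin.last n) ω ∈ Xs k}
          (groupCoverageEvent n X Y S (Xs k) α) :=
  fixed_partition_group_conditional_coverage_general μ n K X Y hmeas hident hindep S hS Xs hXsmeas
    hpos α hα0 k
end

section
/- Suppose C^{(1)},...,C^{(h)} are random sets each satisfying P(Y ∈ C^{(i)}) ≥ 1 - β. Define the majority-vote set C^M = {y : (1/h)·#{i : y ∈ C^{(i)}} > 1/2}. Then P(Y ∈ C^M) ≥ 1 - 2β. -/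
/-!
A point `ω` outside the majority-vote event is missed by at least half of the `h` sets, so
`h / 2 ≤ N ω`, where `N` counts the misses. Since `𝔼 N ≤ h β` by linearity, Markov's inequality
bounds the probability of that by `2 β`, whatever the dependence between the sets.
-/

open MeasureTheory Finset
open scoped ENNReal Classical

lemma card_filter_mem_eq_sum_indicator {Ω ι : Type*} [Fintype ι] (A : ι → Set Ω) (ω : Ω) :
    (#{i | ω ∈ A i} : ℝ≥0∞) = ∑ i, (A i).indicator 1 ω := by
  rw [card_filter]
  push_cast
  simp only [Set.indicator_apply, Pi.one_apply]

namespace MeasureTheory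

variable {Ω ι : Type*} [MeasurableSpace Ω] {μ : Measure Ω} [Fintype ι] {A : ι → Set Ω}

lemma lintegral_card_filter_mem (hA : ∀ i, MeasurableSet (A i)) :
    ∫⁻ ω, (#{i | ω ∈ A i} : ℝ≥0∞) ∂μ = ∑ i, μ (A i) := by
  simp_rw [card_filter_mem_eq_sum_indicator]
  rw [lintegral_finsetSum _ fun i _ => measurable_one.indicator (hA i)]
  simp_rw [lintegral_indicator_one (hA _)]

lemma measure_half_mem_le_two_mul [Nonempty ι] (hA : ∀ i, MeasurableSet (A i)) {ε : ℝ≥0∞}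
    (hε : ∀ i, μ (A i) ≤ ε) :
    μ {ω | Fintype.card ι ≤ 2 * #{i | ω ∈ A i}} ≤ 2 * ε := by
  have hcount : Measurable fun ω ↦ (#{i | ω ∈ A i} : ℝ≥0∞) := by
    simp_rw [card_filter_mem_eq_sum_indicator]
    exact Finset.measurable_sum _ fun i _ => measurable_one.indicator (hA i)
  have markov : Fintype.card ι * μ {ω | Fintype.card ι ≤ 2 * #{i | ω ∈ A i}}
      ≤ Fintype.card ι * (2 * ε) :=
    calc (Fintype.card ι : ℝ≥0∞) * μ {ω | Fintype.card ι ≤ 2 * #{i | ω ∈ A i}}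
        = Fintype.card ι * μ {ω | (Fintype.card ι : ℝ≥0∞) ≤ 2 * #{i | ω ∈ A i}} := by
          norm_cast
      _ ≤ ∫⁻ ω, 2 * (#{i | ω ∈ A i} : ℝ≥0∞) ∂μ :=
        mul_meas_ge_le_lintegral₀ (hcount.const_mul 2).aemeasurable _
      _ = 2 * ∑ i, μ (A i) := by rw [lintegral_const_mul 2 hcount, lintegral_card_filter_mem hA]
      _ ≤ 2 * ∑ _i : ι, ε := by gcongr with i; exact hε i
      _ = Fintype.card ι * (2 * ε) := by rw [sum_const, card_univ, nsmul_eq_mul]; ring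
  exact (ENNReal.mul_le_mul_iff_right (by simp) (by simp)).1 markov

lemma one_sub_two_mul_le_measure_majority [IsProbabilityMeasure μ] [Nonempty ι]
    (hA : ∀ i, MeasurableSet (A i)) {ε : ℝ≥0∞} (hε : ∀ i, μ (A i)ᶜ ≤ ε) :
    1 - 2 * ε ≤ μ {ω | Fintype.card ι < 2 * #{i | ω ∈ A i}} := by
  have hminority : μ {ω | Fintype.card ι < 2 * #{i | ω ∈ A i}}ᶜ ≤ 2 * ε := by
    refine (measure_mono fun ω hω ↦ ?_).trans
      (measure_half_mem_le_two_mul (fun i ↦ (hA i).compl) hε)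
    have hsplit := card_filter_add_card_filter_not (s := univ) (fun i ↦ ω ∈ A i)
    simp only [Set.mem_compl_iff, Set.mem_ofPred_eq, not_lt, card_univ] at hω hsplit ⊢
    omega
  calc 1 - 2 * ε
      ≤ 1 - μ {ω | Fintype.card ι < 2 * #{i | ω ∈ A i}}ᶜ := by gcongr
    _ ≤ μ {ω | Fintype.card ι < 2 * #{i | ω ∈ A i}} := by
        rw [tsub_le_iff_right, ← measure_univ (μ := μ)]
        exact measure_univ_le_add_compl _

end MeasureTheory

/-- Majority-vote aggregation of prediction sets: if each random set `C i` satisfies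
`P(Y ∈ C i) ≥ 1 - β`, then the majority-vote set
`C^M = {y : (1/h) #{i : y ∈ C i} > 1/2}` satisfies `P(Y ∈ C^M) ≥ 1 - 2β`. -/
theorem majority_vote_coverage {Ω 𝒴 : Type*} [MeasurableSpace Ω]
    (μ : Measure Ω) [IsProbabilityMeasure μ]
    (h : ℕ) (hh : 0 < h) (Y : Ω → 𝒴)
    (C : Fin h → Ω → Set 𝒴)
    (hmeas : ∀ i, MeasurableSet {ω | Y ω ∈ C i ω})
    (β : ℝ)
    (hcov : ∀ i, ENNReal.ofReal (1 - β) ≤ μ {ω | Y ω ∈ C i ω}) :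
    ENNReal.ofReal (1 - 2 * β)
      ≤ μ {ω | (1 / (h : ℝ)) * ((Finset.univ.filter (fun i => Y ω ∈ C i ω)).card : ℝ)
            > 1 / 2} := by
  have : Nonempty (Fin h) := ⟨⟨0, hh⟩⟩
  have hβ : 0 ≤ β := by
    have hle := (hcov ⟨0, hh⟩).trans prob_le_one
    rw [ENNReal.ofReal_le_one] at hle
    linarith
  have hmiss : ∀ i, μ {ω | Y ω ∈ C i ω}ᶜ ≤ ENNReal.ofReal β := fun i ↦ by
    rw [prob_compl_eq_one_sub (hmeas i), tsub_le_iff_right]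
    calc 1 = ENNReal.ofReal (β + (1 - β)) := by simp
      _ ≤ ENNReal.ofReal β + ENNReal.ofReal (1 - β) := ENNReal.ofReal_add_le
      _ ≤ _ := by gcongr; exact hcov i
  have hset :
      {ω | (1 / (h : ℝ)) * ((Finset.univ.filter (fun i => Y ω ∈ C i ω)).card : ℝ) > 1 / 2}
        = {ω | Fintype.card (Fin h) < 2 * #{i | ω ∈ {ω | Y ω ∈ C i ω}}} := by
    ext ω
    simp only [Set.mem_ofPred_eq, Fintype.card_fin, gt_iff_lt]
    rw [← Nat.cast_lt (α := ℝ)]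
    push_cast
    field_simp
  rw [hset, ENNReal.ofReal_sub _ (by positivity), ENNReal.ofReal_one,
    ENNReal.ofReal_mul zero_le_two, ENNReal.ofReal_ofNat]
  exact one_sub_two_mul_le_measure_majority hmeas hmiss
end
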